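/- arXiv:1011.4880 — 2 statements merged into one kernel-verified Lean document; each statement's English description precedes it below -/
import Mathlib

section
/- Nabla-monotone l'Hôpital rule on the q-scale (right endpoint): fix q ∈ (0,1), let a = q^m and b = q^n be points of the q-scale with a < b (m, n ∈ ℤ), and let f, g : (0,∞) → ℝ. Suppose that either D_q g(x) > 0 for every point x of the q-scale with a < x ≤ b, or D_q g(x) < 0 for every such x. If the function x ↦ D_q f(x)/D_q g(x) is strictly increasing on the set {x ∈ q^ℤ : a < x ≤ b}, then the function x ↦ (f(x) − f(b))/(g(x) − g(b)) is strictly increasing on the set {x ∈ q^ℤ : a ≤ x < b}. (Note g(x) ≠ g(b) for such x, since g is strictly monotone along the q-scale points of [a,b].) -/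
/-!
Write `F k = f (q ^ k)` and `G k = g (q ^ k)`. On the q-scale, `D_q f / D_q g` at `q ^ k` is the
slope of the chord of the discrete curve `k ↦ (G k, F k)` from `k` to `k + 1`, and the quotient in
the conclusion at `q ^ k` is the slope of the chord from `n` to `k`. As `x = q ^ k` increases, `k`
decreases, so everything becomes a statement about slopes decreasing in `k`. When `G` is
increasing, the chord from `n` to `k + 1` has a slope strictly between those of the chords from `n`
to `k` and from `k` to `k + 1` (it is their mediant). An induction then shows that the unit chord
at `k` is less steep than the chord from `n` to `k`, so adding that unit chord lowers the slope.
Decreasing `G` reduces to increasing `G` by negating `F` and `G`.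
-/

/-- The `q`-derivative of `f` at `x ≠ 0`: `D_q f x = (f (q x) - f x) / ((q - 1) x)`. -/
noncomputable def qDeriv (q : ℝ) (f : ℝ → ℝ) (x : ℝ) : ℝ :=
  (f (q * x) - f x) / ((q - 1) * x)

open Set

section Mediant

variable {α : Type*} [Field α] [LinearOrder α] [IsStrictOrderedRing α] {a b c d : α}

theorem div_lt_add_div_add (hb : 0 < b) (hd : 0 < d) (h : c / d < a / b) :
    c / d < (a + c) / (b + d) := by
  rw [div_lt_div_iff₀ hd hb] at h
  rw [div_lt_div_iff₀ hd (add_pos hb hd)]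
  linear_combination h

theorem add_div_add_lt_div (hb : 0 < b) (hd : 0 < d) (h : c / d < a / b) :
    (a + c) / (b + d) < a / b := by
  rw [div_lt_div_iff₀ hd hb] at h
  rw [div_lt_div_iff₀ (add_pos hb hd) hb]
  linear_combination h

end Mediant

theorem StrictAnti.strictMonoOn_image_iff {α β γ : Type*} [LinearOrder α] [LinearOrder β]
    [Preorder γ] {φ : α → β} (hφ : StrictAnti φ) {u : β → γ} {s : Set α} :
    StrictMonoOn u (φ '' s) ↔ StrictAntiOn (u ∘ φ) s := by
  constructor
  · intro hu i hi j hj hij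
    exact hu (mem_image_of_mem φ hj) (mem_image_of_mem φ hi) (hφ hij)
  · rintro hu _ ⟨i, hi, rfl⟩ _ ⟨j, hj, rfl⟩ hij
    exact hu hj hi (hφ.lt_iff_gt.1 hij)

theorem StrictAnti.image_Ico_eq {α β : Type*} [LinearOrder α] [LinearOrder β] {φ : α → β}
    (hφ : StrictAnti φ) (n m : α) :
    φ '' Ico n m = {x | (∃ k, x = φ k) ∧ φ m < x ∧ x ≤ φ n} := by
  ext x
  constructor
  · rintro ⟨k, ⟨hnk, hkm⟩, rfl⟩
    exact ⟨⟨k, rfl⟩, hφ hkm, hφ.antitone hnk⟩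
  · rintro ⟨⟨k, rfl⟩, hmk, hkn⟩
    exact ⟨k, ⟨hφ.le_iff_ge.1 hkn, hφ.lt_iff_gt.1 hmk⟩, rfl⟩

theorem StrictAnti.image_Ioc_eq {α β : Type*} [LinearOrder α] [LinearOrder β] {φ : α → β}
    (hφ : StrictAnti φ) (n m : α) :
    φ '' Ioc n m = {x | (∃ k, x = φ k) ∧ φ m ≤ x ∧ x < φ n} := by
  ext x
  constructor
  · rintro ⟨k, ⟨hnk, hkm⟩, rfl⟩
    exact ⟨⟨k, rfl⟩, hφ.antitone hkm, hφ hnk⟩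
  · rintro ⟨⟨k, rfl⟩, hmk, hkn⟩
    exact ⟨k, ⟨hφ.lt_iff_gt.1 hkn, hφ.le_iff_ge.1 hmk⟩, rfl⟩

theorem Int.strictMonoOn_Icc_of_lt_add_one {α : Type*} [Preorder α] {G : ℤ → α} {n m : ℤ}
    (hG : ∀ k ∈ Ico n m, G k < G (k + 1)) : StrictMonoOn G (Icc n m) :=
  strictMonoOn_of_lt_succ ordConnected_Icc fun k _ hk hk' => by
    rw [Order.succ_eq_add_one] at hk' ⊢
    exact hG k ⟨hk.1, Int.lt_of_add_one_le hk'.2⟩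

theorem Int.strictAntiOn_Icc_of_add_one_lt {α : Type*} [Preorder α] {G : ℤ → α} {n m : ℤ}
    (hG : ∀ k ∈ Ico n m, G (k + 1) < G k) : StrictAntiOn G (Icc n m) :=
  Int.strictMonoOn_Icc_of_lt_add_one (α := αᵒᵈ) hG

noncomputable def chordSlope (F G : ℤ → ℝ) (j k : ℤ) : ℝ :=
  (F k - F j) / (G k - G j)

namespace chordSlope

variable {F G : ℤ → ℝ}

theorem neg : chordSlope (-F) (-G) = chordSlope F G := by
  ext j k
  simp only [chordSlope, Pi.neg_apply, neg_sub_neg, ← neg_sub (F k), ← neg_sub (G k),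
    neg_div_neg_eq]

theorem mem_Ioo_of_lt {i j k : ℤ} (hij : G i < G j) (hjk : G j < G k)
    (h : chordSlope F G j k < chordSlope F G i j) :
    chordSlope F G i k ∈ Ioo (chordSlope F G j k) (chordSlope F G i j) := by
  have hb : 0 < G j - G i := sub_pos.2 hij
  have hd : 0 < G k - G j := sub_pos.2 hjk
  have hik : chordSlope F G i k = ((F j - F i) + (F k - F j)) / ((G j - G i) + (G k - G j)) := by
    rw [chordSlope, add_comm, sub_add_sub_cancel, add_comm, sub_add_sub_cancel]
  rw [hik]
  exact ⟨div_lt_add_div_add hb hd h, add_div_add_lt_div hb hd h⟩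

section Increasing

variable {n m : ℤ} (hG : StrictMonoOn G (Icc n m))
  (hr : StrictAntiOn (fun k => chordSlope F G k (k + 1)) (Ico n m))
include hG hr

theorem succ_lt_base {k : ℤ} (hk : k ∈ Ioo n m) :
    chordSlope F G k (k + 1) < chordSlope F G n k := by
  obtain ⟨hnk, hkm⟩ := hk
  induction k, hnk using Int.leInduction with
  | base => exact hr ⟨le_rfl, by omega⟩ ⟨by omega, hkm⟩ (lt_add_one n)
  | succ k hnk ih =>
    have hchord := mem_Ioo_of_lt (hG ⟨le_rfl, by omega⟩ ⟨by omega, by omega⟩ hnk)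
      (hG ⟨by omega, by omega⟩ ⟨by omega, by omega⟩ (lt_add_one k)) (ih (by omega))
    exact (hr ⟨by omega, by omega⟩ ⟨by omega, hkm⟩ (lt_add_one k)).trans hchord.1

theorem strictAntiOn_base : StrictAntiOn (chordSlope F G n) (Ioc n m) := by
  refine strictAntiOn_of_succ_lt ordConnected_Ioc fun k _ ⟨hnk, _⟩ hk' => ?_
  rw [Order.succ_eq_add_one, mem_Ioc] at hk'
  rw [Order.succ_eq_add_one]
  exact (mem_Ioo_of_lt (hG ⟨le_rfl, by omega⟩ ⟨by omega, by omega⟩ hnk)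
    (hG ⟨by omega, by omega⟩ ⟨by omega, by omega⟩ (lt_add_one k))
    (succ_lt_base hG hr ⟨hnk, by omega⟩)).2

end Increasing

theorem strictAntiOn_base_of_strictMonoOn_or_strictAntiOn {n m : ℤ}
    (hG : StrictMonoOn G (Icc n m) ∨ StrictAntiOn G (Icc n m))
    (hr : StrictAntiOn (fun k => chordSlope F G k (k + 1)) (Ico n m)) :
    StrictAntiOn (chordSlope F G n) (Ioc n m) := by
  rcases hG with hG | hG
  · exact strictAntiOn_base hG hr
  · rw [← chordSlope.neg] at hr ⊢
    exact strictAntiOn_base hG.neg hr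

end chordSlope

section qDeriv

variable {q : ℝ}

theorem qDeriv_div_qDeriv (hq : q ≠ 1) {x : ℝ} (hx : x ≠ 0) (f g : ℝ → ℝ) :
    qDeriv q f x / qDeriv q g x = (f (q * x) - f x) / (g (q * x) - g x) :=
  div_div_div_cancel_right₀ (mul_ne_zero (sub_ne_zero.2 hq) hx) _ _

theorem qDeriv_pos_iff (hq : q < 1) {x : ℝ} (hx : 0 < x) (g : ℝ → ℝ) :
    0 < qDeriv q g x ↔ g (q * x) < g x := by
  rw [qDeriv, lt_div_iff_of_neg (mul_neg_of_neg_of_pos (sub_neg.2 hq) hx), zero_mul, sub_neg]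

theorem qDeriv_neg_iff (hq : q < 1) {x : ℝ} (hx : 0 < x) (g : ℝ → ℝ) :
    qDeriv q g x < 0 ↔ g x < g (q * x) := by
  rw [qDeriv, div_lt_iff_of_neg (mul_neg_of_neg_of_pos (sub_neg.2 hq) hx), zero_mul, sub_pos]

theorem qDeriv_div_qDeriv_zpow (hq0 : q ≠ 0) (hq1 : q ≠ 1) (f g : ℝ → ℝ) (k : ℤ) :
    qDeriv q f (q ^ k) / qDeriv q g (q ^ k) =
      chordSlope (fun k => f (q ^ k)) (fun k => g (q ^ k)) k (k + 1) := by
  rw [qDeriv_div_qDeriv hq1 (zpow_ne_zero k hq0), mul_comm, ← zpow_add_one₀ hq0, chordSlope]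

end qDeriv

theorem qscale_lhopital_right_increasing_general
    (q : ℝ) (hq0 : 0 < q) (hq1 : q < 1) (m n : ℤ) (a b : ℝ)
    (ha : a = q ^ m) (hb : b = q ^ n) (f g : ℝ → ℝ)
    (S : Set ℝ) (hS : S = {x : ℝ | (∃ k : ℤ, x = q ^ k) ∧ a < x ∧ x ≤ b})
    (hg : (∀ x ∈ S, 0 < qDeriv q g x) ∨ (∀ x ∈ S, qDeriv q g x < 0))
    (hmono : StrictMonoOn (fun x => qDeriv q f x / qDeriv q g x) S) :
    StrictMonoOn (fun x => (f x - f b) / (g x - g b))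
      {x : ℝ | (∃ k : ℤ, x = q ^ k) ∧ a ≤ x ∧ x < b} := by
  subst ha hb hS
  have hφ := zpow_right_strictAnti₀ hq0 hq1
  rw [← hφ.image_Ico_eq, forall_mem_image, forall_mem_image] at hg
  rw [← hφ.image_Ico_eq, hφ.strictMonoOn_image_iff] at hmono
  rw [← hφ.image_Ioc_eq, hφ.strictMonoOn_image_iff]
  have hstep (k : ℤ) : q * q ^ k = q ^ (k + 1) := by rw [zpow_add_one₀ hq0.ne', mul_comm]
  refine chordSlope.strictAntiOn_base_of_strictMonoOn_or_strictAntiOn (hg.symm.imp ?_ ?_) ?_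
  · refine fun h => Int.strictMonoOn_Icc_of_lt_add_one fun k hk => ?_
    simpa only [qDeriv_neg_iff hq1 (zpow_pos hq0 k), hstep] using h hk
  · refine fun h => Int.strictAntiOn_Icc_of_add_one_lt fun k hk => ?_
    simpa only [qDeriv_pos_iff hq1 (zpow_pos hq0 k), hstep] using h hk
  · simpa only [Function.comp_def, qDeriv_div_qDeriv_zpow hq0.ne' hq1.ne] using hmono

/-- Nabla-monotone l'Hôpital rule on the q-scale (right endpoint):
if `D_q g` has constant sign on the q-scale points of `(a, b]` and
`D_q f / D_q g` is strictly increasing there, then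
`x ↦ (f x - f b) / (g x - g b)` is strictly increasing on the q-scale
points of `[a, b)`. -/
theorem qscale_lhopital_right_increasing
    (q : ℝ) (hq0 : 0 < q) (hq1 : q < 1) (m n : ℤ) (a b : ℝ)
    (ha : a = q ^ m) (hb : b = q ^ n) (hab : a < b) (f g : ℝ → ℝ)
    (S : Set ℝ) (hS : S = {x : ℝ | (∃ k : ℤ, x = q ^ k) ∧ a < x ∧ x ≤ b})
    (hg : (∀ x ∈ S, 0 < qDeriv q g x) ∨ (∀ x ∈ S, qDeriv q g x < 0))
    (hmono : StrictMonoOn (fun x => qDeriv q f x / qDeriv q g x) S) :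
    StrictMonoOn (fun x => (f x - f b) / (g x - g b))
      {x : ℝ | (∃ k : ℤ, x = q ^ k) ∧ a ≤ x ∧ x < b} :=
  qscale_lhopital_right_increasing_general q hq0 hq1 m n a b ha hb f g S hS hg hmono
end

section
/- Upper bound for the q-exponential: fix q ∈ (0,1), let a = q^m and b = q^ℓ be points of the q-scale with a < b, suppose q^{-1}a ≤ b and b < 1/(1−q) and q^{-1}a < 1/(1−q), and let n ∈ ℕ, n ≥ 1. Then for every point x of the q-scale with q^{-1}a ≤ x ≤ b one has e_q^x ≤ Σ_{k=0}^{n−1} (e_q^a/[k]!) (x−a)^k_q + [ (e_q^{b} − Σ_{k=0}^{n−1} (e_q^a/[k]!) (b − a)^k_q ) / (b − a)^n_q ] · (x−a)^n_q. -/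
/-- The q-bracket of a natural number: `[k] = (q^k - 1)/(q - 1)`. -/
noncomputable def qNat (q : ℝ) (k : ℕ) : ℝ := (q ^ k - 1) / (q - 1)

/-- The q-factorial: `[0]! = 1`, `[k+1]! = [k+1] ⬝ [k]!`. -/
noncomputable def qFactorial (q : ℝ) : ℕ → ℝ
  | 0 => 1
  | k + 1 => qNat q (k + 1) * qFactorial q k

/-- The q-shifted power `(x - a)^k_q = ∏_{j=0}^{k-1} (x - q^j a)`. -/
noncomputable def qShiftedPow (q x a : ℝ) (k : ℕ) : ℝ :=
  ∏ j ∈ Finset.range k, (x - q ^ j * a)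

/-- The q-exponential `e_q^x = Σ_{k=0}^∞ x^k/[k]!`. -/
noncomputable def qExp (q x : ℝ) : ℝ := ∑' k : ℕ, x ^ k / qFactorial q k

/-!
For `0 ≤ a ≤ y < 1/(1-q)` the q-Taylor expansion `e_q^y = e_q^a Σ_k (y-a)^k_q/[k]!` holds: the
product `e_q^c Σ_k (y-c)^k_q/[k]!` is invariant under `c ↦ qc`, because the two factors satisfy
q-difference equations with the reciprocal factors `1 - (1-q)c`, and letting `c = q^N a → 0` it
tends to `e_q^y`. Splitting the series after `n` terms, the remainder is
`e_q^a (y-a)^n_q T(y)` with `T(y) = Σ_j (y - q^n a)^j_q/[j+n]!`, which is increasing in `y`;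
the bound is `T(x) ≤ T(b)`.
-/

open Filter Finset Set Topology

section qFactorial

variable {q : ℝ}

lemma qNat_eq_geom_sum (hq : q ≠ 1) (k : ℕ) : qNat q k = ∑ i ∈ range k, q ^ i :=
  (geom_sum_eq hq k).symm

lemma qNat_eq_one_sub_div (q : ℝ) (k : ℕ) : qNat q k = (1 - q ^ k) / (1 - q) := by
  rw [qNat, ← neg_div_neg_eq, neg_sub, neg_sub]

lemma one_le_qNat_succ (hq0 : 0 ≤ q) (hq1 : q ≠ 1) (k : ℕ) : 1 ≤ qNat q (k + 1) := by
  rw [qNat_eq_geom_sum hq1, sum_range_succ']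
  simpa using sum_nonneg fun i _ => pow_nonneg hq0 (i + 1)

lemma one_le_qFactorial (hq0 : 0 ≤ q) (hq1 : q ≠ 1) : ∀ k, 1 ≤ qFactorial q k
  | 0 => le_rfl
  | k + 1 => one_le_mul_of_one_le_of_one_le (one_le_qNat_succ hq0 hq1 k)
      (one_le_qFactorial hq0 hq1 k)

lemma qFactorial_pos (hq0 : 0 ≤ q) (hq1 : q ≠ 1) (k : ℕ) : 0 < qFactorial q k :=
  one_pos.trans_le (one_le_qFactorial hq0 hq1 k)

lemma qFactorial_mono (hq0 : 0 ≤ q) (hq1 : q ≠ 1) : Monotone (qFactorial q) :=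
  monotone_nat_of_le_succ fun k =>
    le_mul_of_one_le_left (qFactorial_pos hq0 hq1 k).le (one_le_qNat_succ hq0 hq1 k)

lemma one_sub_pow_succ_div_qFactorial_succ (hq0 : 0 ≤ q) (hq1 : q ≠ 1) (k : ℕ) :
    (1 - q ^ (k + 1)) / qFactorial q (k + 1) = (1 - q) / qFactorial q k := by
  have hq : 1 - q ≠ 0 := sub_ne_zero.2 hq1.symm
  have hN : 1 - q ^ (k + 1) ≠ 0 := fun h => by
    simpa [qNat_eq_one_sub_div, h] using (one_le_qNat_succ hq0 hq1 k).trans_lt' zero_lt_one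
  have hF := (qFactorial_pos hq0 hq1 k).ne'
  rw [qFactorial, qNat_eq_one_sub_div]
  field_simp

end qFactorial

section qShiftedPow

variable {q : ℝ}

lemma qShiftedPow_succ (y c : ℝ) (k : ℕ) :
    qShiftedPow q y c (k + 1) = qShiftedPow q y c k * (y - q ^ k * c) :=
  prod_range_succ _ _

lemma qShiftedPow_succ' (y c : ℝ) (k : ℕ) :
    qShiftedPow q y c (k + 1) = qShiftedPow q y (q * c) k * (y - c) := by
  rw [qShiftedPow, prod_range_succ']
  simp only [qShiftedPow, pow_succ, pow_zero, one_mul, mul_assoc]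

lemma qShiftedPow_add (y c : ℝ) (n j : ℕ) :
    qShiftedPow q y c (n + j) = qShiftedPow q y c n * qShiftedPow q y (q ^ n * c) j := by
  simp only [qShiftedPow, prod_range_add, pow_add, mul_assoc, mul_left_comm]

lemma qShiftedPow_succ_sub_q_mul (y c : ℝ) (k : ℕ) :
    qShiftedPow q y c (k + 1) - qShiftedPow q y (q * c) (k + 1) =
      (q ^ (k + 1) - 1) * c * qShiftedPow q y (q * c) k := by
  rw [qShiftedPow_succ', qShiftedPow_succ, pow_succ]
  ring

variable (hq0 : 0 ≤ q) (hq1 : q ≤ 1)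
include hq0 hq1

lemma q_pow_mul_le_self {c : ℝ} (hc : 0 ≤ c) (j : ℕ) : q ^ j * c ≤ c :=
  mul_le_of_le_one_left hc (pow_le_one₀ hq0 hq1)

lemma qShiftedPow_nonneg {y c : ℝ} (h0c : 0 ≤ c) (hcy : c ≤ y) (k : ℕ) :
    0 ≤ qShiftedPow q y c k :=
  prod_nonneg fun j _ => sub_nonneg.2 ((q_pow_mul_le_self hq0 hq1 h0c j).trans hcy)

lemma qShiftedPow_pos {y c : ℝ} (h0c : 0 ≤ c) (hcy : c < y) (k : ℕ) :
    0 < qShiftedPow q y c k :=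
  prod_pos fun j _ => sub_pos.2 ((q_pow_mul_le_self hq0 hq1 h0c j).trans_lt hcy)

lemma qShiftedPow_mono {x y c : ℝ} (h0c : 0 ≤ c) (hcx : c ≤ x) (hxy : x ≤ y) (k : ℕ) :
    qShiftedPow q x c k ≤ qShiftedPow q y c k :=
  prod_le_prod (fun j _ => sub_nonneg.2 ((q_pow_mul_le_self hq0 hq1 h0c j).trans hcx))
    fun _ _ => by linarith

lemma qShiftedPow_le_pow {y c : ℝ} (h0c : 0 ≤ c) (hcy : c ≤ y) (k : ℕ) :
    qShiftedPow q y c k ≤ y ^ k := by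
  refine (prod_le_prod (fun j _ => ?_) fun j _ => ?_).trans_eq (pow_eq_prod_const y k).symm
  · exact sub_nonneg.2 ((q_pow_mul_le_self hq0 hq1 h0c j).trans hcy)
  · linarith [mul_nonneg (pow_nonneg hq0 j) h0c]

end qShiftedPow

lemma tsum_sub_tsum_eq_of_succ {f g h : ℕ → ℝ} (hf : Summable f) (hg : Summable g)
    (h0 : f 0 = g 0) (hsucc : ∀ k, f (k + 1) - g (k + 1) = h k) :
    ∑' k, f k - ∑' k, g k = ∑' k, h k := by
  rw [← hf.tsum_sub hg, (hf.sub hg).tsum_eq_zero_add]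
  simp [h0, hsucc]

noncomputable def qExpTaylor (q y a : ℝ) : ℝ :=
  ∑' k : ℕ, qShiftedPow q y a k / qFactorial q k

noncomputable def qExpTaylorTail (q y a : ℝ) (n : ℕ) : ℝ :=
  ∑' j : ℕ, qShiftedPow q y (q ^ n * a) j / qFactorial q (j + n)

@[simp]
lemma qExp_zero (q : ℝ) : qExp q 0 = 1 := by
  rw [qExp, tsum_eq_single 0 fun k hk => by simp [zero_pow hk]]
  simp [qFactorial]

@[simp]
lemma qExpTaylor_zero_right (q y : ℝ) : qExpTaylor q y 0 = qExp q y := by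
  simp [qExpTaylor, qExp, qShiftedPow]

section qExp

variable {q : ℝ} (hq0 : 0 ≤ q) (hq1 : q < 1)
include hq0 hq1

lemma summable_pow_div_qFactorial {y : ℝ} (h0y : 0 ≤ y) (hy : y < 1 / (1 - q)) :
    Summable fun k => y ^ k / qFactorial q k := by
  have h1q : 0 < 1 - q := sub_pos.2 hq1
  obtain ⟨r, hyr, hr⟩ := exists_between hy
  have hr0 : 0 < r := h0y.trans_lt hyr
  -- ratio test at `r ∈ (y, 1/(1-q))`: the ratio `r / [k+1]` tends to `r (1-q) < 1`
  have hratio :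
      Tendsto (fun k => ‖r ^ (k + 1) / qFactorial q (k + 1)‖ / ‖r ^ k / qFactorial q k‖)
        atTop (𝓝 (r * (1 - q) / (1 - 0))) := by
    have hpow := (tendsto_pow_atTop_nhds_zero_of_lt_one hq0 hq1).comp (tendsto_add_atTop_nat 1)
    refine (tendsto_const_nhds.div (tendsto_const_nhds.sub hpow) (by norm_num)).congr fun k => ?_
    have hF := qFactorial_pos hq0 hq1.ne k
    have hF1 := qFactorial_pos hq0 hq1.ne (k + 1)
    simp only [Pi.div_apply, Function.comp_apply, norm_div, norm_pow, Real.norm_eq_abs,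
      abs_of_pos hr0, abs_of_pos hF, abs_of_pos hF1]
    rw [qFactorial, qNat_eq_one_sub_div]
    have hN : 1 - q ^ (k + 1) ≠ 0 := (sub_pos.2 (pow_lt_one₀ hq0 hq1 k.succ_ne_zero)).ne'
    field_simp
    ring
  refine Summable.of_nonneg_of_le (fun k => div_nonneg (pow_nonneg h0y k)
    (qFactorial_pos hq0 hq1.ne k).le) (fun k => div_le_div_of_nonneg_right
      (pow_le_pow_left₀ h0y hyr.le k) (qFactorial_pos hq0 hq1.ne k).le) ?_
  refine summable_of_ratio_test_tendsto_lt_one ?_ (Eventually.of_forall fun k => ?_) hratio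
  · rw [sub_zero, div_one, ← lt_div_iff₀ h1q]; exact hr
  · exact div_ne_zero (pow_ne_zero k hr0.ne') (qFactorial_pos hq0 hq1.ne k).ne'

lemma summable_qShiftedPow_div_qFactorial {y c : ℝ} (h0c : 0 ≤ c) (hcy : c ≤ y)
    (hy : y < 1 / (1 - q)) : Summable fun k => qShiftedPow q y c k / qFactorial q k :=
  (summable_pow_div_qFactorial hq0 hq1 (h0c.trans hcy) hy).of_nonneg_of_le
    (fun k => div_nonneg (qShiftedPow_nonneg hq0 hq1.le h0c hcy k)
      (qFactorial_pos hq0 hq1.ne k).le)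
    fun k => div_le_div_of_nonneg_right (qShiftedPow_le_pow hq0 hq1.le h0c hcy k)
      (qFactorial_pos hq0 hq1.ne k).le

lemma qExp_nonneg {y : ℝ} (h0y : 0 ≤ y) : 0 ≤ qExp q y :=
  tsum_nonneg fun k => div_nonneg (pow_nonneg h0y k) (qFactorial_pos hq0 hq1.ne k).le

lemma qExp_q_mul {c : ℝ} (h0c : 0 ≤ c) (hc : c < 1 / (1 - q)) :
    qExp q (q * c) = (1 - (1 - q) * c) * qExp q c := by
  have hqc : q * c ≤ c := by simpa using q_pow_mul_le_self hq0 hq1.le h0c 1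
  have hs := summable_pow_div_qFactorial hq0 hq1 h0c hc
  have key := tsum_sub_tsum_eq_of_succ (h := fun k => (1 - q) * c * (c ^ k / qFactorial q k)) hs
    (summable_pow_div_qFactorial hq0 hq1 (mul_nonneg hq0 h0c) (hqc.trans_lt hc)) (by simp)
    fun k => calc
      _ = c * c ^ k * ((1 - q ^ (k + 1)) / qFactorial q (k + 1)) := by ring
      _ = _ := by rw [one_sub_pow_succ_div_qFactorial_succ hq0 hq1.ne]; ring
  rw [tsum_mul_left] at key
  unfold qExp
  linarith

lemma qExpTaylor_eq_q_mul {y c : ℝ} (h0c : 0 ≤ c) (hcy : c ≤ y) (hy : y < 1 / (1 - q)) :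
    qExpTaylor q y c = (1 - (1 - q) * c) * qExpTaylor q y (q * c) := by
  have hqc : q * c ≤ c := by simpa using q_pow_mul_le_self hq0 hq1.le h0c 1
  have key := tsum_sub_tsum_eq_of_succ
    (h := fun k => -((1 - q) * c) * (qShiftedPow q y (q * c) k / qFactorial q k))
    (summable_qShiftedPow_div_qFactorial hq0 hq1 h0c hcy hy)
    (summable_qShiftedPow_div_qFactorial hq0 hq1 (mul_nonneg hq0 h0c) (hqc.trans hcy) hy)
    (by simp [qShiftedPow]) fun k => calc
      _ = -(c * qShiftedPow q y (q * c) k) * ((1 - q ^ (k + 1)) / qFactorial q (k + 1)) := by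
        rw [← sub_div, qShiftedPow_succ_sub_q_mul]; ring
      _ = _ := by rw [one_sub_pow_succ_div_qFactorial_succ hq0 hq1.ne]; ring
  rw [tsum_mul_left] at key
  unfold qExpTaylor
  linarith

end qExp

section qTaylor

variable {q : ℝ} (hq0 : 0 ≤ q) (hq1 : q < 1)
include hq0 hq1

lemma continuousOn_tsum_div_qFactorial {f : ℕ → ℝ → ℝ} {s : Set ℝ} {y : ℝ}
    (hf : ∀ k, Continuous (f k)) (hfy : ∀ k, ∀ c ∈ s, |f k c| ≤ y ^ k) (h0y : 0 ≤ y)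
    (hy : y < 1 / (1 - q)) : ContinuousOn (fun c => ∑' k, f k c / qFactorial q k) s :=
  continuousOn_tsum (fun k => ((hf k).div_const _).continuousOn)
    (summable_pow_div_qFactorial hq0 hq1 h0y hy) fun k c hc => by
      rw [norm_div, Real.norm_eq_abs, Real.norm_of_nonneg (qFactorial_pos hq0 hq1.ne k).le]
      exact div_le_div_of_nonneg_right (hfy k c hc) (qFactorial_pos hq0 hq1.ne k).le

lemma qExp_mul_qExpTaylor_pow_mul {y a : ℝ} (h0a : 0 ≤ a) (hay : a ≤ y) (hy : y < 1 / (1 - q))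
    (N : ℕ) : qExp q (q ^ N * a) * qExpTaylor q y (q ^ N * a) = qExp q a * qExpTaylor q y a := by
  induction N with
  | zero => simp
  | succ N ih =>
    have h0c : 0 ≤ q ^ N * a := mul_nonneg (pow_nonneg hq0 N) h0a
    have hcy : q ^ N * a ≤ y := (q_pow_mul_le_self hq0 hq1.le h0a N).trans hay
    rw [← ih, pow_succ', mul_assoc, qExp_q_mul hq0 hq1 h0c (hcy.trans_lt hy),
      qExpTaylor_eq_q_mul hq0 hq1 h0c hcy hy]
    ring

theorem qExp_eq_qExp_mul_qExpTaylor {y a : ℝ} (h0a : 0 ≤ a) (hay : a ≤ y)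
    (hy : y < 1 / (1 - q)) : qExp q y = qExp q a * qExpTaylor q y a := by
  have h0y := h0a.trans hay
  have hmem : (0 : ℝ) ∈ Icc 0 y := ⟨le_rfl, h0y⟩
  have hExp : ContinuousOn (qExp q) (Icc 0 y) :=
    continuousOn_tsum_div_qFactorial hq0 hq1 continuous_pow (fun k c hc => by
      rw [abs_of_nonneg (pow_nonneg hc.1 k)]; exact pow_le_pow_left₀ hc.1 hc.2 k) h0y hy
  have hTaylor : ContinuousOn (qExpTaylor q y) (Icc 0 y) :=
    continuousOn_tsum_div_qFactorial hq0 hq1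
      (fun k => continuous_finsetProd _ fun j _ => by fun_prop)
      (fun k c hc => by
        rw [abs_of_nonneg (qShiftedPow_nonneg hq0 hq1.le hc.1 hc.2 k)]
        exact qShiftedPow_le_pow hq0 hq1.le hc.1 hc.2 k) h0y hy
  have hlim : Tendsto (fun N => q ^ N * a) atTop (𝓝[Icc 0 y] 0) := by
    refine tendsto_nhdsWithin_of_tendsto_nhds_of_eventually_within _ ?_
      (Eventually.of_forall fun N => ⟨mul_nonneg (pow_nonneg hq0 N) h0a,
        (q_pow_mul_le_self hq0 hq1.le h0a N).trans hay⟩)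
    simpa using (tendsto_pow_atTop_nhds_zero_of_lt_one hq0 hq1).mul_const a
  have := ((hExp 0 hmem).tendsto.comp hlim).mul ((hTaylor 0 hmem).tendsto.comp hlim)
  simp only [Function.comp_def, qExp_mul_qExpTaylor_pow_mul hq0 hq1 h0a hay hy] at this
  rw [qExp_zero, qExpTaylor_zero_right, one_mul] at this
  exact tendsto_nhds_unique this tendsto_const_nhds

lemma qExpTaylor_eq_sum_add_tail {y a : ℝ} (h0a : 0 ≤ a) (hay : a ≤ y) (hy : y < 1 / (1 - q))
    (n : ℕ) : qExpTaylor q y a = ∑ k ∈ range n, qShiftedPow q y a k / qFactorial q k +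
      qShiftedPow q y a n * qExpTaylorTail q y a n := by
  rw [qExpTaylor,
    ← (summable_qShiftedPow_div_qFactorial hq0 hq1 h0a hay hy).sum_add_tsum_nat_add n,
    qExpTaylorTail, ← tsum_mul_left]
  congr 1
  refine tsum_congr fun j => ?_
  rw [add_comm j n, qShiftedPow_add, mul_div_assoc]

lemma qExpTaylorTail_mono {x y a : ℝ} (h0a : 0 ≤ a) (hax : a ≤ x) (hxy : x ≤ y)
    (hy : y < 1 / (1 - q)) (n : ℕ) : qExpTaylorTail q x a n ≤ qExpTaylorTail q y a n := by
  have h0c : 0 ≤ q ^ n * a := mul_nonneg (pow_nonneg hq0 n) h0a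
  have hcx : q ^ n * a ≤ x := (q_pow_mul_le_self hq0 hq1.le h0a n).trans hax
  have hF := fun j => qFactorial_pos hq0 hq1.ne (j + n)
  have hle := fun j => div_le_div_of_nonneg_right
    (qShiftedPow_mono hq0 hq1.le h0c hcx hxy j) (hF j).le
  have hsy : Summable fun j => qShiftedPow q y (q ^ n * a) j / qFactorial q (j + n) :=
    (summable_pow_div_qFactorial hq0 hq1 (h0a.trans (hax.trans hxy)) hy).of_nonneg_of_le
      (fun j => div_nonneg (qShiftedPow_nonneg hq0 hq1.le h0c (hcx.trans hxy) j) (hF j).le)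
      fun j => div_le_div₀ (pow_nonneg (h0a.trans (hax.trans hxy)) j)
        (qShiftedPow_le_pow hq0 hq1.le h0c (hcx.trans hxy) j) (qFactorial_pos hq0 hq1.ne j)
        (qFactorial_mono hq0 hq1.ne (j.le_add_right n))
  exact (hsy.of_nonneg_of_le (fun j => div_nonneg (qShiftedPow_nonneg hq0 hq1.le h0c hcx j)
    (hF j).le) hle).tsum_le_tsum hle hsy

theorem qExp_sub_sum_eq {y a : ℝ} (h0a : 0 ≤ a) (hay : a ≤ y) (hy : y < 1 / (1 - q))
    (n : ℕ) :
    qExp q y - ∑ k ∈ range n, qExp q a / qFactorial q k * qShiftedPow q y a k =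
      qExp q a * qExpTaylorTail q y a n * qShiftedPow q y a n := by
  rw [qExp_eq_qExp_mul_qExpTaylor hq0 hq1 h0a hay hy,
    qExpTaylor_eq_sum_add_tail hq0 hq1 h0a hay hy n, mul_add, mul_sum]
  simp only [div_mul_eq_mul_div, mul_div_assoc]
  ring

end qTaylor

theorem qExp_upper_bound_general
    (q : ℝ) (hq0 : 0 < q) (hq1 : q < 1) (m : ℤ) (a b : ℝ)
    (ha : a = q ^ m) (hbr : b < 1 / (1 - q))
    (n : ℕ) :
    ∀ x : ℝ, (∃ k : ℤ, x = q ^ k) → q⁻¹ * a ≤ x → x ≤ b →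
      qExp q x ≤
        (∑ k ∈ Finset.range n, qExp q a / qFactorial q k * qShiftedPow q x a k) +
        (qExp q b -
            ∑ k ∈ Finset.range n,
              qExp q a / qFactorial q k * qShiftedPow q b a k) /
          qShiftedPow q b a n * qShiftedPow q x a n := by
  intro x _ hqx hxb
  have ha0 : 0 < a := ha ▸ zpow_pos hq0 m
  have hax : a < x := (lt_mul_left ha0 ((one_lt_inv₀ hq0).2 hq1)).trans_le hqx
  have hxr : x < 1 / (1 - q) := hxb.trans_lt hbr
  have hPb : 0 < qShiftedPow q b a n := qShiftedPow_pos hq0.le hq1.le ha0.le (hax.trans_le hxb) n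
  rw [← sub_le_iff_le_add', qExp_sub_sum_eq hq0.le hq1 ha0.le hax.le hxr,
    qExp_sub_sum_eq hq0.le hq1 ha0.le (hax.le.trans hxb) hbr, mul_div_cancel_right₀ _ hPb.ne']
  gcongr
  · exact qShiftedPow_nonneg hq0.le hq1.le ha0.le hax.le n
  · exact qExp_nonneg hq0.le hq1 ha0.le
  · exact qExpTaylorTail_mono hq0.le hq1 ha0.le hax.le hxb hbr n

/-- Upper bound for the q-exponential on the q-scale. -/
theorem qExp_upper_bound
    (q : ℝ) (hq0 : 0 < q) (hq1 : q < 1) (m l : ℤ) (a b : ℝ)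
    (ha : a = q ^ m) (hb : b = q ^ l) (hab : a < b)
    (hab' : q⁻¹ * a ≤ b) (hbr : b < 1 / (1 - q)) (har : q⁻¹ * a < 1 / (1 - q))
    (n : ℕ) (hn : 1 ≤ n) :
    ∀ x : ℝ, (∃ k : ℤ, x = q ^ k) → q⁻¹ * a ≤ x → x ≤ b →
      qExp q x ≤
        (∑ k ∈ Finset.range n, qExp q a / qFactorial q k * qShiftedPow q x a k) +
        (qExp q b -
            ∑ k ∈ Finset.range n,
              qExp q a / qFactorial q k * qShiftedPow q b a k) /
          qShiftedPow q b a n * qShiftedPow q x a n :=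
  qExp_upper_bound_general q hq0 hq1 m a b ha hbr n
end
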